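/- arXiv:1102.2535 — 3 statements merged into one kernel-verified Lean document; each statement's English description precedes it below -/
import Mathlib

section
/- Let ξ be a real random variable with mean zero and finite (m+1)-th absolute moment, whose first m moments agree with those of a standard Gaussian, and let f : ℝ → ℝ be m times continuously differentiable with ‖f^{(m)}‖_∞ < ∞. Then |E[ξ f(ξ)] − E[ξ²]·E[f'(ξ)]| ≤ ((m+1)/m!) · E[|ξ|^{m+1}] · ‖f^{(m)}‖_∞. -/
/-!
Let `P` be the Maclaurin polynomial of `f` of degree `m - 1`. For a polynomial `p` of degree
`< m`, the quantity `E[ξ p(ξ)] - E[ξ²] E[p'(ξ)]` involves only moments of `ξ` of order `≤ m`,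
so it takes the same value as for a standard Gaussian `Z`, where it vanishes by Stein's identity
`E[Z p(Z)] = E[p'(Z)]` (for `m = 1`, `p' = 0`; for `m ≥ 2`, `E[ξ²] = 1`). Hence the left-hand
side is unchanged when `f` is replaced by `f - P`. The Lagrange remainder bounds
`|f - P| ≤ M |x|^m / m!` and `|f' - P'| ≤ M |x|^(m-1) / (m-1)!`, together with Chebyshev's
inequality `E[ξ²] E[|ξ|^(m-1)] ≤ E[|ξ|^(m+1)]` for the similarly ordered functions `|ξ|²` and
`|ξ|^(m-1)`, give the bound `(1/m! + 1/(m-1)!) M E[|ξ|^(m+1)]`.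
-/

open MeasureTheory ProbabilityTheory Polynomial

section PolynomialMoments

variable {Ω : Type*} [MeasurableSpace Ω] {μ : Measure Ω} {Y : Ω → ℝ}

lemma Polynomial.integrable_eval_of_natDegree_le {p : ℝ[X]} {n : ℕ} (hp : p.natDegree ≤ n)
    (hY : ∀ i ≤ n, Integrable (fun ω => Y ω ^ i) μ) :
    Integrable (fun ω => p.eval (Y ω)) μ := by
  simp_rw [eval_eq_sum_range]
  exact integrable_finsetSum _ fun i hi =>
    (hY i ((Nat.lt_succ_iff.1 (Finset.mem_range.1 hi)).trans hp)).const_mul _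

lemma Polynomial.integral_eval_eq_sum_coeff_mul_moment {p : ℝ[X]} {n : ℕ}
    (hp : p.natDegree ≤ n) (hY : ∀ i ≤ n, Integrable (fun ω => Y ω ^ i) μ) :
    ∫ ω, p.eval (Y ω) ∂μ = ∑ i ∈ Finset.range (p.natDegree + 1), p.coeff i * ∫ ω, Y ω ^ i ∂μ := by
  simp_rw [eval_eq_sum_range]
  rw [integral_finsetSum _ fun i hi =>
    (hY i ((Nat.lt_succ_iff.1 (Finset.mem_range.1 hi)).trans hp)).const_mul _]
  simp_rw [integral_const_mul]

lemma Polynomial.integral_eval_eq_of_moments_eq {Ω' : Type*} [MeasurableSpace Ω']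
    {ν : Measure Ω'} {Y' : Ω' → ℝ} {p : ℝ[X]} {n : ℕ} (hp : p.natDegree ≤ n)
    (hY : ∀ i ≤ n, Integrable (fun ω => Y ω ^ i) μ)
    (hY' : ∀ i ≤ n, Integrable (fun ω => Y' ω ^ i) ν)
    (hmom : ∀ i ≤ n, ∫ ω, Y ω ^ i ∂μ = ∫ ω, Y' ω ^ i ∂ν) :
    ∫ ω, p.eval (Y ω) ∂μ = ∫ ω, p.eval (Y' ω) ∂ν := by
  rw [integral_eval_eq_sum_coeff_mul_moment hp hY, integral_eval_eq_sum_coeff_mul_moment hp hY']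
  exact Finset.sum_congr rfl fun i hi => by
    rw [hmom i ((Nat.lt_succ_iff.1 (Finset.mem_range.1 hi)).trans hp)]

end PolynomialMoments

lemma integrable_pow_gaussianReal (μ : ℝ) (v : NNReal) (n : ℕ) :
    Integrable (fun x => x ^ n) (gaussianReal μ v) :=
  integrable_pow_of_mem_interior_integrableExpSet
    (by simp [integrableExpSet_fun_id_gaussianReal]) n

lemma MeasureTheory.Integrable.gaussianPDFReal_mul {μ : ℝ} {v : NNReal} (hv : v ≠ 0)
    {g : ℝ → ℝ} (hg : Integrable g (gaussianReal μ v)) :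
    Integrable (fun x => gaussianPDFReal μ v x * g x) := by
  rw [gaussianReal_of_var_ne_zero μ hv, integrable_withDensity_iff_integrable_smul'
    (measurable_gaussianPDF μ v) (ae_of_all _ fun _ => gaussianPDF_lt_top)] at hg
  simpa [toReal_gaussianPDF] using hg

lemma hasDerivAt_gaussianPDFReal_zero_one (x : ℝ) :
    HasDerivAt (gaussianPDFReal 0 1) (-x * gaussianPDFReal 0 1 x) x := by
  have hφ : gaussianPDFReal 0 1 = fun x => (√(2 * Real.pi))⁻¹ * Real.exp (-x ^ 2 / 2) := by
    ext; simp [gaussianPDFReal]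
  rw [hφ]
  exact (((hasDerivAt_pow 2 x).fun_neg.div_const 2).exp.const_mul _).congr_deriv (by ring)

theorem integral_mul_eval_gaussianReal (p : ℝ[X]) :
    ∫ x, x * p.eval x ∂gaussianReal 0 1 = ∫ x, p.derivative.eval x ∂gaussianReal 0 1 := by
  have hint (q : ℝ[X]) : Integrable (fun x => gaussianPDFReal 0 1 x * q.eval x) :=
    (integrable_eval_of_natDegree_le le_rfl fun i _ =>
      integrable_pow_gaussianReal 0 1 i).gaussianPDFReal_mul one_ne_zero
  have hderiv (x : ℝ) : HasDerivAt (fun x => gaussianPDFReal 0 1 x * p.eval x)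
      (gaussianPDFReal 0 1 x * p.derivative.eval x - gaussianPDFReal 0 1 x * (X * p).eval x) x :=
    ((hasDerivAt_gaussianPDFReal_zero_one x).fun_mul (p.hasDerivAt x)).congr_deriv
      (by rw [eval_mul, eval_X]; ring)
  have h := integral_eq_zero_of_hasDerivAt_of_integrable hderiv ((hint _).sub (hint _)) (hint p)
  rw [integral_sub (hint _) (hint _), sub_eq_zero] at h
  simp only [integral_gaussianReal_eq_integral_smul one_ne_zero, smul_eq_mul, h, eval_mul, eval_X]

section MomentMatching

variable {Ω : Type*} [MeasurableSpace Ω] {μ : Measure Ω} {Y : Ω → ℝ} {m : ℕ}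

theorem integral_mul_eval_eq_integral_derivative_eval_of_moments_eq
    (hY : ∀ k ≤ m, Integrable (fun ω => Y ω ^ k) μ)
    (hmom : ∀ k ≤ m, ∫ ω, Y ω ^ k ∂μ = ∫ x, x ^ k ∂gaussianReal 0 1)
    {p : ℝ[X]} (hp : p.natDegree < m) :
    ∫ ω, Y ω * p.eval (Y ω) ∂μ = ∫ ω, p.derivative.eval (Y ω) ∂μ := by
  have transfer {q : ℝ[X]} (hq : q.natDegree ≤ m) :=
    integral_eval_eq_of_moments_eq hq hY (fun i _ => integrable_pow_gaussianReal 0 1 i) hmom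
  have hXp : (X * p).natDegree ≤ m := natDegree_mul_le.trans (by rw [natDegree_X]; omega)
  have hp' : p.derivative.natDegree ≤ m := (natDegree_derivative_le p).trans (by omega)
  simpa only [eval_mul, eval_X, integral_mul_eval_gaussianReal, transfer hp'] using transfer hXp

theorem integral_mul_eval_eq_integral_sq_mul_of_moments_eq
    (hY : ∀ k ≤ m, Integrable (fun ω => Y ω ^ k) μ)
    (hmom : ∀ k ≤ m, ∫ ω, Y ω ^ k ∂μ = ∫ x, x ^ k ∂gaussianReal 0 1)
    {p : ℝ[X]} (hp : p.natDegree < m) :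
    ∫ ω, Y ω * p.eval (Y ω) ∂μ = (∫ ω, Y ω ^ 2 ∂μ) * ∫ ω, p.derivative.eval (Y ω) ∂μ := by
  rw [integral_mul_eval_eq_integral_derivative_eval_of_moments_eq hY hmom hp]
  rcases Nat.lt_or_ge p.natDegree 1 with hp₀ | hp₁
  · simp [derivative_of_natDegree_zero (Nat.lt_one_iff.1 hp₀)]
  · have hvar : ∫ x, x ^ 2 ∂gaussianReal 0 1 = 1 := by
      simpa [sq] using integral_mul_eval_gaussianReal X
    rw [hmom 2 (by omega), hvar, one_mul]

theorem integral_mul_sub_integral_sq_mul_eq_of_moments_eq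
    (hY : ∀ k ≤ m, Integrable (fun ω => Y ω ^ k) μ)
    (hmom : ∀ k ≤ m, ∫ ω, Y ω ^ k ∂μ = ∫ x, x ^ k ∂gaussianReal 0 1)
    {p : ℝ[X]} (hp : p.natDegree < m) {g g' : ℝ → ℝ}
    (hg : Integrable (fun ω => Y ω * g (Y ω)) μ) (hg' : Integrable (fun ω => g' (Y ω)) μ) :
    (∫ ω, Y ω * g (Y ω) ∂μ) - (∫ ω, Y ω ^ 2 ∂μ) * ∫ ω, g' (Y ω) ∂μ
      = (∫ ω, Y ω * (g (Y ω) - p.eval (Y ω)) ∂μ)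
        - (∫ ω, Y ω ^ 2 ∂μ) * ∫ ω, (g' (Y ω) - p.derivative.eval (Y ω)) ∂μ := by
  have hXp : Integrable (fun ω => Y ω * p.eval (Y ω)) μ := by
    have := integrable_eval_of_natDegree_le
      (natDegree_mul_le.trans (by rw [natDegree_X]; omega) : (X * p).natDegree ≤ m) hY
    simpa only [eval_mul, eval_X] using this
  have hp' : Integrable (fun ω => p.derivative.eval (Y ω)) μ :=
    integrable_eval_of_natDegree_le ((natDegree_derivative_le p).trans (by omega)) hY
  simp_rw [mul_sub]
  rw [integral_sub hg hXp, integral_sub hg' hp',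
    integral_mul_eval_eq_integral_sq_mul_of_moments_eq hY hmom hp]
  ring

end MomentMatching

section Maclaurin

open Nat

/-- Of degree `< n`, unlike `taylorWithin f n`, which has degree `n`. -/
noncomputable def maclaurinPoly (f : ℝ → ℝ) (n : ℕ) : ℝ[X] :=
  ∑ k ∈ Finset.range n, C (iteratedDeriv k f 0 / k !) * X ^ k

variable (f : ℝ → ℝ) (n : ℕ)

lemma eval_maclaurinPoly (x : ℝ) :
    (maclaurinPoly f n).eval x = ∑ k ∈ Finset.range n, iteratedDeriv k f 0 / k ! * x ^ k := by
  simp [maclaurinPoly, eval_finsetSum]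

lemma natDegree_maclaurinPoly_le : (maclaurinPoly f n).natDegree ≤ n - 1 :=
  natDegree_sum_le_of_forall_le _ _ fun k hk =>
    (natDegree_C_mul_X_pow_le _ k).trans (Nat.le_sub_one_of_lt (Finset.mem_range.1 hk))

lemma derivative_maclaurinPoly :
    derivative (maclaurinPoly f (n + 1)) = maclaurinPoly (deriv f) n := by
  simp only [maclaurinPoly, derivative_sum, derivative_C_mul_X_pow]
  rw [Finset.sum_range_succ']
  simp only [← iteratedDeriv_succ', CharP.cast_eq_zero, mul_zero, C_0, zero_mul, add_zero,
    add_tsub_cancel_right]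
  refine Finset.sum_congr rfl fun k _ => ?_
  congr 2
  rw [Nat.factorial_succ, Nat.cast_mul]
  field_simp

variable {f n}

theorem abs_sub_eval_maclaurinPoly_le {M : ℝ} (hf : ContDiff ℝ n f)
    (hM : ∀ x, |iteratedDeriv n f x| ≤ M) (x : ℝ) :
    |f x - (maclaurinPoly f n).eval x| ≤ M * |x| ^ n / n ! := by
  cases n with
  | zero => simpa [maclaurinPoly] using hM x
  | succ n =>
    rcases eq_or_ne x 0 with rfl | hx
    · simp [eval_maclaurinPoly, Finset.sum_range_succ']
    obtain ⟨y, -, hy⟩ := taylor_mean_remainder_lagrange_iteratedDeriv hx.symm hf.contDiffOn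
    have htaylor : taylorWithinEval f n (Set.uIcc 0 x) 0 x = (maclaurinPoly f (n + 1)).eval x := by
      rw [taylor_within_apply, eval_maclaurinPoly]
      refine Finset.sum_congr rfl fun k hk => ?_
      rw [iteratedDerivWithin_eq_iteratedDeriv (uniqueDiffOn_uIcc hx.symm)
        (hf.contDiffAt.of_le (by exact_mod_cast (Finset.mem_range.1 hk).le)) Set.left_mem_uIcc]
      simp only [sub_zero, smul_eq_mul]
      ring
    rw [← htaylor, hy, sub_zero, abs_div, abs_mul, abs_pow, Nat.abs_cast]
    gcongr
    exact hM y

end Maclaurin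

section MomentInequalities

variable {Ω : Type*} [MeasurableSpace Ω] {μ : Measure Ω}

theorem Monovary.integral_mul_integral_le [IsProbabilityMeasure μ] {f g : Ω → ℝ}
    (hfg : Monovary f g) (hf : Integrable f μ) (hg : Integrable g μ)
    (hfg' : Integrable (fun ω => f ω * g ω) μ) :
    (∫ ω, f ω ∂μ) * ∫ ω, g ω ∂μ ≤ ∫ ω, f ω * g ω ∂μ := by
  have h : ∫ z, (f z.1 * g z.2 + g z.1 * f z.2) ∂μ.prod μ
      ≤ ∫ z, (f z.1 * g z.1 + f z.2 * g z.2) ∂μ.prod μ :=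
    integral_mono ((hf.mul_prod hg).add (hg.mul_prod hf))
      ((hfg'.comp_fst μ).add (hfg'.comp_snd μ)) fun z => by
        have := hfg.mul_add_mul_le_mul_add_mul z.1 z.2
        simp only
        linarith
  rw [integral_add (hf.mul_prod hg) (hg.mul_prod hf), integral_add (f := fun z => f z.1 * g z.1)
    (hfg'.comp_fst μ) (hfg'.comp_snd μ), integral_prod_mul, integral_prod_mul,
    integral_fun_fst (fun ω => f ω * g ω), integral_fun_snd (fun ω => f ω * g ω)] at h
  simp only [probReal_univ, one_smul] at h
  linarith

theorem integral_pow_mul_integral_pow_le [IsProbabilityMeasure μ] {Y : Ω → ℝ} (hY : 0 ≤ Y)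
    {a b : ℕ} (ha : Integrable (fun ω => Y ω ^ a) μ) (hb : Integrable (fun ω => Y ω ^ b) μ)
    (hab : Integrable (fun ω => Y ω ^ (a + b)) μ) :
    (∫ ω, Y ω ^ a ∂μ) * ∫ ω, Y ω ^ b ∂μ ≤ ∫ ω, Y ω ^ (a + b) ∂μ := by
  simp_rw [pow_add] at hab ⊢
  exact ((monovary_self Y).pow_left₀ hY a |>.pow_right₀ hY b).integral_mul_integral_le ha hb hab

lemma abs_integral_le_mul_integral_abs_pow {Y : Ω → ℝ} {g : ℝ → ℝ} {C : ℝ} {k : ℕ}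
    (hg : ∀ y, |g y| ≤ C * |y| ^ k) (hY : Integrable (fun ω => |Y ω| ^ k) μ) :
    |∫ ω, g (Y ω) ∂μ| ≤ C * ∫ ω, |Y ω| ^ k ∂μ := by
  rw [← integral_const_mul]
  exact norm_integral_le_of_norm_le (f := fun ω => g (Y ω)) (hY.const_mul C)
    (ae_of_all _ fun ω => hg (Y ω))

variable {Y : Ω → ℝ} {f : ℝ → ℝ} {n : ℕ} {M : ℝ}

theorem abs_integral_sub_eval_maclaurinPoly_le (hf : ContDiff ℝ n f)
    (hM : ∀ x, |iteratedDeriv n f x| ≤ M) (hY : Integrable (fun ω => |Y ω| ^ n) μ) :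
    |∫ ω, (f (Y ω) - (maclaurinPoly f n).eval (Y ω)) ∂μ|
      ≤ M / n.factorial * ∫ ω, |Y ω| ^ n ∂μ :=
  abs_integral_le_mul_integral_abs_pow (g := fun y => f y - (maclaurinPoly f n).eval y)
    (fun y => (abs_sub_eval_maclaurinPoly_le hf hM y).trans_eq (by ring)) hY

theorem abs_integral_mul_sub_eval_maclaurinPoly_le (hf : ContDiff ℝ n f)
    (hM : ∀ x, |iteratedDeriv n f x| ≤ M) (hY : Integrable (fun ω => |Y ω| ^ (n + 1)) μ) :
    |∫ ω, Y ω * (f (Y ω) - (maclaurinPoly f n).eval (Y ω)) ∂μ|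
      ≤ M / n.factorial * ∫ ω, |Y ω| ^ (n + 1) ∂μ := by
  refine abs_integral_le_mul_integral_abs_pow (g := fun y => y * (f y - (maclaurinPoly f n).eval y))
    (fun y => ?_) hY
  rw [abs_mul, pow_succ', mul_left_comm, div_mul_eq_mul_div]
  exact mul_le_mul_of_nonneg_left (abs_sub_eval_maclaurinPoly_le hf hM y) (abs_nonneg y)

end MomentInequalities

/-- Gaussian approximation lemma: if the first `m` moments of `ξ` agree with those of a
standard Gaussian, `E[|ξ|^{m+1}] < ∞`, and `f ∈ C^m` with bounded `m`-th derivative `M`,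
then `|E[ξ f(ξ)] − E[ξ²] E[f'(ξ)]| ≤ ((m+1)/m!) E[|ξ|^{m+1}] M`. -/
theorem gaussian_approximation_lemma
    {Ω : Type*} [MeasurableSpace Ω] (μ : Measure Ω) [IsProbabilityMeasure μ]
    (ξ : Ω → ℝ) (hmeas : Measurable ξ)
    (m : ℕ) (hm : 1 ≤ m)
    (hmoments : ∀ k : ℕ, 1 ≤ k → k ≤ m →
      ∫ ω, (ξ ω) ^ k ∂μ = ∫ x, x ^ k ∂(gaussianReal 0 1))
    (hmomInt : ∀ k : ℕ, k ≤ m + 1 → Integrable (fun ω => |ξ ω| ^ k) μ)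
    (f : ℝ → ℝ) (hf : ContDiff ℝ m f) (M : ℝ)
    (hM : ∀ x : ℝ, |iteratedDeriv m f x| ≤ M)
    (hInt₁ : Integrable (fun ω => ξ ω * f (ξ ω)) μ)
    (hInt₂ : Integrable (fun ω => deriv f (ξ ω)) μ) :
    |(∫ ω, ξ ω * f (ξ ω) ∂μ) - (∫ ω, (ξ ω) ^ 2 ∂μ) * ∫ ω, deriv f (ξ ω) ∂μ|
      ≤ ((m + 1 : ℝ) / (Nat.factorial m : ℝ)) * (∫ ω, |ξ ω| ^ (m + 1) ∂μ) * M := by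
  obtain ⟨n, rfl⟩ := Nat.exists_eq_add_of_le' hm
  have hpow (k : ℕ) (hk : k ≤ n + 1) : Integrable (fun ω => ξ ω ^ k) μ :=
    (integrable_norm_iff (hmeas.pow_const k).aestronglyMeasurable).1
      (by simpa only [norm_pow, Real.norm_eq_abs] using hmomInt k (by omega))
  have hmom (k : ℕ) (hk : k ≤ n + 1) : ∫ ω, ξ ω ^ k ∂μ = ∫ x, x ^ k ∂gaussianReal 0 1 := by
    rcases k.eq_zero_or_pos with rfl | hk₀
    · simp
    · exact hmoments k hk₀ hk
  rw [integral_mul_sub_integral_sq_mul_eq_of_moments_eq hpow hmom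
    ((natDegree_maclaurinPoly_le f (n + 1)).trans_lt (by omega)) hInt₁ hInt₂,
    derivative_maclaurinPoly]
  have hrem₁ := abs_integral_mul_sub_eval_maclaurinPoly_le hf hM (hmomInt (n + 1 + 1) le_rfl)
  have hrem₂ := abs_integral_sub_eval_maclaurinPoly_le (contDiff_succ_iff_deriv.1 hf).2.2
    (fun x => by rw [← iteratedDeriv_succ']; exact hM x) (hmomInt n (by omega))
  have hcheb := integral_pow_mul_integral_pow_le (Y := fun ω => |ξ ω|) (fun ω => abs_nonneg _)
    (hmomInt 2 (by omega)) (hmomInt n (by omega)) (hmomInt (2 + n) (by omega))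
  simp only [sq_abs, add_comm 2 n] at hcheb
  have hvar : 0 ≤ ∫ ω, ξ ω ^ 2 ∂μ := integral_nonneg fun ω => sq_nonneg (ξ ω)
  have hM₀ : 0 ≤ M := (abs_nonneg _).trans (hM 0)
  calc _ ≤ |∫ ω, ξ ω * (f (ξ ω) - (maclaurinPoly f (n + 1)).eval (ξ ω)) ∂μ|
        + (∫ ω, ξ ω ^ 2 ∂μ)
          * |∫ ω, (deriv f (ξ ω) - (maclaurinPoly (deriv f) n).eval (ξ ω)) ∂μ| := by
        rw [← abs_of_nonneg hvar, ← abs_mul, abs_of_nonneg hvar]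
        exact abs_sub _ _
    _ ≤ M / (n + 1).factorial * (∫ ω, |ξ ω| ^ (n + 1 + 1) ∂μ)
        + M / n.factorial * ((∫ ω, ξ ω ^ 2 ∂μ) * ∫ ω, |ξ ω| ^ n ∂μ) := by
        rw [mul_left_comm]
        gcongr
    _ ≤ M / (n + 1).factorial * (∫ ω, |ξ ω| ^ (n + 1 + 1) ∂μ)
        + M / n.factorial * ∫ ω, |ξ ω| ^ (n + 1 + 1) ∂μ := by gcongr
    _ = _ := by
        rw [Nat.factorial_succ]
        push_cast
        field_simp
        ring
end

section
/- Let μ be a probability measure on a finite set S, let X : S → ℝ be a function with |X(s)| ≤ 1 for all s, and for λ ∈ ℝ define the tilted expectation ω_λ(X) = (Σ_s X(s) e^{λ X(s)} μ(s)) / (Σ_s e^{λ X(s)} μ(s)). Then the m-th derivative of λ ↦ ω_λ(X) is bounded in absolute value by (m+1)! for every λ. -/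
open Finset

/-- Exponentially tilted mean of an observable `X` on a finite set with weights `p`. -/
noncomputable def tiltedMean {S : Type*} [Fintype S] (p : S → ℝ) (X : S → ℝ) (l : ℝ) : ℝ :=
  (∑ s : S, X s * Real.exp (l * X s) * p s) / (∑ s : S, Real.exp (l * X s) * p s)

section

open Complex Metric Real

/-!
Writing `Z(z) = ∑ₛ e^{z X(s)} μ(s)`, the tilted mean is `Z'/Z`, which extends holomorphically to
the strip `|Im z| < π/2`: there `Re Z(z) ≥ cos (Im z) · ∑ₛ e^{Re z · X(s)} μ(s) > 0`, while
`|Z'(z)|` is at most that same sum. Hence `|Z'/Z| ≤ 1 / cos 1 ≤ 2` on the unit disc around any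
real `λ`, and Cauchy's estimate gives `|ω_λ^{(m)}| ≤ 2 m! ≤ (m+1)!` for `m ≥ 1`; for `m = 0` the
bound `|ω_λ| ≤ 1` is the same estimate on the real line.
-/

theorem iteratedDeriv_re_comp_ofReal {f : ℂ → ℂ} (hf : ∀ x : ℝ, AnalyticAt ℂ f x) (m : ℕ)
    (x : ℝ) : iteratedDeriv m (fun y : ℝ ↦ (f y).re) x = (iteratedDeriv m f x).re := by
  induction m generalizing x with
  | zero => simp
  | succ m ih =>
    have hdiff : DifferentiableAt ℂ (iteratedDeriv m f) x := by
      rw [iteratedDeriv_eq_iterate]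
      exact ((hf x).iterated_deriv m).differentiableAt
    rw [iteratedDeriv_succ, iteratedDeriv_succ, funext ih]
    exact hdiff.hasDerivAt.real_of_complex.deriv

variable {S : Type*} [Fintype S] (p X : S → ℝ)

noncomputable def complexPartitionFunction (z : ℂ) : ℂ := ∑ s, cexp (z * X s) * p s

noncomputable def complexTiltedMean (z : ℂ) : ℂ :=
  (∑ s, X s * cexp (z * X s) * p s) / complexPartitionFunction p X z

variable {p X}

theorem re_complexPartitionFunction (z : ℂ) :
    (complexPartitionFunction p X z).re =
      ∑ s, Real.exp (z.re * X s) * Real.cos (z.im * X s) * p s := by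
  rw [complexPartitionFunction, re_sum]
  refine sum_congr rfl fun s _ ↦ ?_
  simp [mul_re, exp_re]

theorem cos_mul_sum_le_re_complexPartitionFunction (hp0 : ∀ s, 0 ≤ p s) (hX : ∀ s, |X s| ≤ 1)
    {z : ℂ} {θ : ℝ} (hzθ : |z.im| ≤ θ) (hθ : θ ≤ π) :
    Real.cos θ * ∑ s, Real.exp (z.re * X s) * p s ≤ (complexPartitionFunction p X z).re := by
  rw [re_complexPartitionFunction, mul_sum]
  refine sum_le_sum fun s _ ↦ ?_
  have hcos : Real.cos θ ≤ Real.cos (z.im * X s) := by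
    rw [← Real.cos_abs (z.im * X s)]
    refine Real.cos_le_cos_of_nonneg_of_le_pi (abs_nonneg _) hθ ?_
    rw [abs_mul]
    nlinarith [abs_nonneg z.im, abs_nonneg (X s), hX s]
  have := mul_nonneg (Real.exp_pos (z.re * X s)).le (hp0 s)
  nlinarith

theorem sum_exp_mul_pos (hp0 : ∀ s, 0 ≤ p s) (hp : 0 < ∑ s, p s) (x : ℝ) :
    0 < ∑ s, Real.exp (x * X s) * p s := by
  obtain ⟨s₀, -, hs₀⟩ := exists_lt_of_sum_lt (f := fun _ ↦ (0 : ℝ)) (by simpa using hp)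
  exact sum_pos' (fun s _ ↦ mul_nonneg (Real.exp_pos _).le (hp0 s))
    ⟨s₀, mem_univ _, mul_pos (Real.exp_pos _) hs₀⟩

theorem complexPartitionFunction_ne_zero (hp0 : ∀ s, 0 ≤ p s) (hp : 0 < ∑ s, p s)
    (hX : ∀ s, |X s| ≤ 1) {z : ℂ} (hz : |z.im| < π / 2) : complexPartitionFunction p X z ≠ 0 := by
  have hcos : 0 < Real.cos |z.im| :=
    Real.cos_pos_of_mem_Ioo ⟨by linarith [abs_nonneg z.im], hz⟩
  have hre := cos_mul_sum_le_re_complexPartitionFunction hp0 hX le_rfl (by linarith [pi_pos])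
  have := mul_pos hcos (sum_exp_mul_pos (X := X) hp0 hp z.re)
  intro h
  rw [h, zero_re] at hre
  linarith

theorem norm_sum_mul_cexp_le (hp0 : ∀ s, 0 ≤ p s) (hX : ∀ s, |X s| ≤ 1) (z : ℂ) :
    ‖∑ s, X s * cexp (z * X s) * p s‖ ≤ ∑ s, Real.exp (z.re * X s) * p s := by
  refine (norm_sum_le _ _).trans (sum_le_sum fun s _ ↦ ?_)
  rw [norm_mul, norm_mul, norm_real, norm_real, norm_exp, Real.norm_eq_abs, Real.norm_eq_abs,
    abs_of_nonneg (hp0 s)]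
  have := mul_nonneg (Real.exp_pos (z * X s).re).le (hp0 s)
  simp only [mul_re, ofReal_re, ofReal_im, mul_zero, sub_zero] at this ⊢
  nlinarith [hX s]

theorem norm_complexTiltedMean_le (hp0 : ∀ s, 0 ≤ p s) (hX : ∀ s, |X s| ≤ 1)
    {z : ℂ} {θ : ℝ} (hzθ : |z.im| ≤ θ) (hθ : θ < π / 2) :
    ‖complexTiltedMean p X z‖ ≤ (Real.cos θ)⁻¹ := by
  have hcos : 0 < Real.cos θ :=
    Real.cos_pos_of_mem_Ioo ⟨by linarith [abs_nonneg z.im], hθ⟩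
  have hden : Real.cos θ * ∑ s, Real.exp (z.re * X s) * p s ≤ ‖complexPartitionFunction p X z‖ :=
    (cos_mul_sum_le_re_complexPartitionFunction hp0 hX hzθ (by linarith [pi_pos])).trans
      (re_le_norm _)
  have hnum := norm_sum_mul_cexp_le hp0 hX z
  rw [complexTiltedMean, norm_div]
  refine div_le_of_le_mul₀ (norm_nonneg _) (inv_pos.2 hcos).le ?_
  rw [le_inv_mul_iff₀ hcos]
  exact (mul_le_mul_of_nonneg_left hnum hcos.le).trans hden

theorem inv_cos_one_le_two : (Real.cos 1)⁻¹ ≤ 2 := by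
  rw [inv_le_comm₀ cos_one_pos two_pos]
  linarith [one_sub_sq_div_two_lt_cos (x := 1) one_ne_zero]

theorem isOpen_setOf_abs_im_lt (a : ℝ) : IsOpen {z : ℂ | |z.im| < a} :=
  isOpen_lt (continuous_abs.comp continuous_im) continuous_const

theorem differentiableOn_complexTiltedMean (hp0 : ∀ s, 0 ≤ p s) (hp : 0 < ∑ s, p s)
    (hX : ∀ s, |X s| ≤ 1) : DifferentiableOn ℂ (complexTiltedMean p X) {z | |z.im| < π / 2} :=
  fun z hz ↦ (DifferentiableAt.div (by fun_prop) (by unfold complexPartitionFunction; fun_prop)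
    (complexPartitionFunction_ne_zero hp0 hp hX hz)).differentiableWithinAt

theorem analyticAt_complexTiltedMean (hp0 : ∀ s, 0 ≤ p s) (hp : 0 < ∑ s, p s)
    (hX : ∀ s, |X s| ≤ 1) (x : ℝ) : AnalyticAt ℂ (complexTiltedMean p X) x :=
  (differentiableOn_complexTiltedMean hp0 hp hX).analyticAt
    ((isOpen_setOf_abs_im_lt _).mem_nhds (by simp [pi_pos]))

theorem complexTiltedMean_ofReal (x : ℝ) : complexTiltedMean p X x = tiltedMean p X x := by
  rw [complexTiltedMean, complexPartitionFunction, tiltedMean]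
  push_cast
  rfl

theorem norm_iteratedDeriv_complexTiltedMean_le (hp0 : ∀ s, 0 ≤ p s) (hp : 0 < ∑ s, p s)
    (hX : ∀ s, |X s| ≤ 1) {r : ℝ} (hr : 0 < r) (hrπ : r < π / 2) (m : ℕ) (x : ℝ) :
    ‖iteratedDeriv m (complexTiltedMean p X) x‖ ≤ m.factorial * (Real.cos r)⁻¹ / r ^ m := by
  have him : ∀ z ∈ closedBall (x : ℂ) r, |z.im| ≤ r := fun z hz ↦ by
    simpa using (abs_im_le_norm (z - x)).trans (mem_closedBall_iff_norm.1 hz)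
  refine norm_iteratedDeriv_le_of_forall_mem_sphere_norm_le m hr
    ((differentiableOn_complexTiltedMean hp0 hp hX).diffContOnCl_ball
      fun z hz ↦ (him z hz).trans_lt hrπ) fun z hz ↦ ?_
  exact norm_complexTiltedMean_le hp0 hX (him z (sphere_subset_closedBall hz)) hrπ

end

theorem tiltedMean_iteratedDeriv_bound_general
    {S : Type*} [Fintype S] (p : S → ℝ)
    (hp0 : ∀ s, 0 ≤ p s) (hp1 : ∑ s : S, p s = 1)
    (X : S → ℝ) (hX : ∀ s, |X s| ≤ 1) (m : ℕ) (l : ℝ) :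
    |iteratedDeriv m (tiltedMean p X) l| ≤ ((m + 1).factorial : ℝ) := by
  have hp : 0 < ∑ s, p s := hp1 ▸ one_pos
  have hre : tiltedMean p X = fun x : ℝ ↦ (complexTiltedMean p X x).re :=
    funext fun x ↦ by rw [complexTiltedMean_ofReal, Complex.ofReal_re]
  rw [hre, iteratedDeriv_re_comp_ofReal (analyticAt_complexTiltedMean hp0 hp hX)]
  refine (Complex.abs_re_le_norm _).trans ?_
  cases m with
  | zero =>
    simpa using norm_complexTiltedMean_le hp0 hX (z := l) (θ := 0) (by simp) (by positivity)
  | succ m =>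
    have hπ : 1 < Real.pi / 2 := by linarith [Real.pi_gt_three]
    calc _ ≤ (m + 1).factorial * (Real.cos 1)⁻¹ / 1 ^ (m + 1) :=
          norm_iteratedDeriv_complexTiltedMean_le hp0 hp hX one_pos hπ (m + 1) l
      _ ≤ (m + 1).factorial * 2 := by
          rw [one_pow, div_one]
          gcongr
          exact inv_cos_one_le_two
      _ ≤ (m + 1 + 1).factorial := by
          rw [Nat.factorial_succ (m + 1), Nat.cast_mul, mul_comm]
          gcongr
          norm_cast
          omega

/-- The `m`-th derivative in `λ` of the tilted mean of a `±1`-bounded observable is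
bounded in absolute value by `(m+1)!`. -/
theorem tiltedMean_iteratedDeriv_bound
    {S : Type*} [Fintype S] [Nonempty S] (p : S → ℝ)
    (hp0 : ∀ s, 0 ≤ p s) (hp1 : ∑ s : S, p s = 1)
    (X : S → ℝ) (hX : ∀ s, |X s| ≤ 1) (m : ℕ) (l : ℝ) :
    |iteratedDeriv m (tiltedMean p X) l| ≤ ((m + 1).factorial : ℝ) :=
  tiltedMean_iteratedDeriv_bound_general p hp0 hp1 X hX m l
end

section
/- Let ξ be a real random variable with E[ξ] = 0 and all moments up to order m equal to the corresponding standard Gaussian moments (m ≥ 2), and let F : ℝ → ℝ be smooth with all derivatives bounded. Define φ(t) = E[F(√t ξ + √(1−t) g)] where g is an independent standard Gaussian. Then |φ(1) − φ(0)| ≤ ((m+1)/m!) E[|ξ|^{m+1}] ‖F^{(m+1)}‖_∞ · ∫_0^1 t^{(m-1)/2} dt / 2. -/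
open MeasureTheory ProbabilityTheory Real Filter
open scoped ENNReal NNReal


private lemma integral_abs_pow_aux (p : ℕ) (x : ℝ) :
    ∫ t in (0:ℝ)..x, |t| ^ p = x * |x| ^ p / (p + 1) := by
  rcases le_or_gt 0 x with hx | hx
  · rw [intervalIntegral.integral_congr (g := fun t : ℝ => t ^ p)
      (fun t ht => by
        rw [Set.uIcc_of_le hx] at ht
        simp [abs_of_nonneg ht.1]), integral_pow, abs_of_nonneg hx]
    ring
  · rw [intervalIntegral.integral_congr (g := fun t : ℝ => (-1:ℝ)^p * t ^ p)
      (fun t ht => by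
        rw [Set.uIcc_of_ge hx.le] at ht
        rw [abs_of_nonpos ht.2, neg_pow]), intervalIntegral.integral_const_mul, integral_pow,
      abs_of_neg hx]
    ring

private lemma taylor_bound (M : ℝ) :
    ∀ (n : ℕ) (h : ℝ → ℝ), ContDiff ℝ (⊤ : ℕ∞) h →
      (∀ y, |iteratedDeriv (n + 1) h y| ≤ M) → ∀ x : ℝ,
      |h x - ∑ k ∈ Finset.range (n + 1), iteratedDeriv k h 0 * x ^ k / (k.factorial : ℝ)|
        ≤ M * |x| ^ (n + 1) / ((n + 1).factorial : ℝ) := by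
  intro n
  induction n with
  | zero =>
    intro h hh hbd x
    have hM : 0 ≤ M := le_trans (abs_nonneg _) (hbd 0)
    have hkey : h x - h 0 = ∫ t in (0:ℝ)..x, deriv h t :=
      (intervalIntegral.integral_eq_sub_of_hasDerivAt
        (fun t _ => (hh.differentiable (by simp) t).hasDerivAt)
        ((contDiff_infty_iff_deriv.mp hh).2.continuous.intervalIntegrable _ _)).symm
    have h2 : |h x - h 0| ≤ |∫ t in (0:ℝ)..x, M| := by
      rw [hkey, ← Real.norm_eq_abs (∫ t in (0:ℝ)..x, deriv h t)]
      exact intervalIntegral.norm_integral_le_abs_of_norm_le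
        (Filter.Eventually.of_forall fun t => by
          rw [Real.norm_eq_abs]
          simpa [iteratedDeriv_one] using hbd t)
        (intervalIntegrable_const)
    simp only [intervalIntegral.integral_const, smul_eq_mul, sub_zero] at h2
    have hsum1 : ∑ k ∈ Finset.range (0+1), iteratedDeriv k h 0 * x ^ k / (k.factorial : ℝ)
        = h 0 := by simp
    rw [hsum1]
    refine h2.trans (le_of_eq ?_)
    rw [abs_mul, abs_of_nonneg hM]
    norm_num [mul_comm]
  | succ n ih =>
    intro h hh hbd x
    have hM : 0 ≤ M := le_trans (abs_nonneg _) (hbd 0)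
    set h' := deriv h with hh'def
    have hh' : ContDiff ℝ (⊤ : ℕ∞) h' := (contDiff_infty_iff_deriv.mp hh).2
    have hder : ∀ k, iteratedDeriv k h' = iteratedDeriv (k+1) h := fun k =>
      (iteratedDeriv_succ').symm
    have IH := ih h' hh' (fun y => by rw [hder]; exact hbd y)
    set c : ℕ → ℝ := fun k => iteratedDeriv k h 0 with hc
    set S : ℝ → ℝ := fun t => ∑ k ∈ Finset.range (n + 1),
      iteratedDeriv k h' 0 * t ^ k / (k.factorial : ℝ) with hS
    have hGderiv : ∀ t : ℝ, HasDerivAt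
        (fun y => h y - ∑ k ∈ Finset.range (n + 2), c k * y ^ k / (k.factorial : ℝ))
        (h' t - S t) t := by
      intro t
      refine HasDerivAt.sub ((hh.differentiable (by simp) t).hasDerivAt) ?_
      have hterm : ∀ k ∈ Finset.range (n+2),
          HasDerivAt (fun y : ℝ => c k * y ^ k / (k.factorial : ℝ))
          (c k * ((k : ℝ) * t ^ (k-1)) / (k.factorial : ℝ)) t := fun k _ =>
        ((hasDerivAt_pow k t).const_mul (c k)).div_const _
      have hsum := HasDerivAt.sum hterm
      convert hsum using 1
      · ext y; simp [Finset.sum_apply]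
      rw [hS, Finset.sum_range_succ' (fun k => c k * ((k:ℝ) * t^(k-1)) / (k.factorial:ℝ)) (n+1)]
      simp only [Nat.cast_zero, zero_mul, mul_zero, zero_div, add_zero]
      refine Finset.sum_congr rfl fun i _ => ?_
      rw [hder, hc]
      have h1 : ((i:ℝ) + 1) ≠ 0 := by positivity
      have h2 : (i.factorial : ℝ) ≠ 0 := by positivity
      push_cast [Nat.factorial_succ]
      field_simp
    have hS0 : (∑ k ∈ Finset.range (n + 2), c k * (0:ℝ) ^ k / (k.factorial : ℝ)) = h 0 := by
      rw [Finset.sum_eq_single_of_mem 0 (by simp)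
        (fun k _ hk => by simp [zero_pow hk])]
      simp [hc, iteratedDeriv_zero]
    have hScont : Continuous S := by
      exact continuous_finset_sum _ fun k _ =>
        (continuous_const.mul (continuous_pow k)).div_const _
    have key : h x - ∑ k ∈ Finset.range (n + 2), c k * x ^ k / (k.factorial : ℝ)
        = ∫ t in (0:ℝ)..x, (h' t - S t) := by
      rw [intervalIntegral.integral_eq_sub_of_hasDerivAt (fun t _ => hGderiv t)
        ((hh'.continuous.sub hScont).intervalIntegrable _ _)]
      rw [hS0]
      simp [iteratedDeriv_zero]
    rw [key]
    have hb2 : |∫ t in (0:ℝ)..x, (h' t - S t)|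
        ≤ |∫ t in (0:ℝ)..x, M * |t| ^ (n+1) / ((n+1).factorial : ℝ)| := by
      rw [← Real.norm_eq_abs (∫ t in (0:ℝ)..x, (h' t - S t))]
      refine intervalIntegral.norm_integral_le_abs_of_norm_le
        (Filter.Eventually.of_forall fun t => by rw [Real.norm_eq_abs]; exact IH t) ?_
      exact ((continuous_const.mul (continuous_abs.pow _)).div_const _).intervalIntegrable _ _
    refine hb2.trans ?_
    have hrw : (fun t : ℝ => M * |t| ^ (n+1) / ((n+1).factorial : ℝ))
        = fun t : ℝ => (M / ((n+1).factorial : ℝ)) * |t| ^ (n+1) := by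
      funext t; ring
    have hval : ∫ t in (0:ℝ)..x, M * |t| ^ (n+1) / ((n+1).factorial : ℝ)
        = (M / ((n+1).factorial : ℝ)) * (x * |x| ^ (n+1) / ((n:ℝ)+1+1)) := by
      rw [hrw, intervalIntegral.integral_const_mul, integral_abs_pow_aux]
      push_cast
      ring
    rw [hval]
    have k1 : ((n+1).factorial : ℝ) ≠ 0 := by positivity
    have k2 : ((n:ℝ)+1+1) ≠ 0 := by positivity
    have h3 : |M / ((n+1).factorial : ℝ) * (x * |x| ^ (n+1) / ((n:ℝ)+1+1))|
        = M / ((n+1).factorial : ℝ) * (|x| * |x| ^ (n+1) / ((n:ℝ)+1+1)) := by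
      simp only [abs_mul, abs_div, abs_abs, abs_pow]
      rw [abs_of_nonneg hM, abs_of_nonneg (by positivity : (0:ℝ) ≤ ((n+1).factorial : ℝ)),
        abs_of_nonneg (by positivity : (0:ℝ) ≤ (n:ℝ)+1+1)]
    rw [h3, Nat.factorial_succ (n+1)]
    push_cast
    rw [← pow_succ']
    field_simp
    ring_nf
    exact le_refl _


private lemma abs_pow_mul_exp_integrable (k : ℕ) :
    Integrable (fun x : ℝ => |x| ^ k * Real.exp (-x^2/2)) volume := by
  have C0 : (0:ℝ) ≤ (k.factorial : ℝ) * 4 ^ k + 1 := by positivity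
  have hbound : ∀ x : ℝ, |x| ^ k * Real.exp (-x^2/2)
      ≤ ((k.factorial : ℝ) * 4 ^ k + 1) * Real.exp (-(1/4) * x^2) := by
    intro x
    have h1 : |x| ^ k ≤ 1 + (x^2)^k := by
      rcases le_or_gt (|x|) 1 with h | h
      · have h0 : |x| ^ k ≤ 1 := pow_le_one₀ (abs_nonneg x) h
        nlinarith [pow_nonneg (sq_nonneg x) k]
      · have : |x| ^ k ≤ (|x| ^ k) ^ 2 := by
          nlinarith [pow_pos (lt_trans one_pos h) k, one_le_pow₀ h.le (n := k)]
        calc |x| ^ k ≤ (|x|^k)^2 := this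
        _ = (x^2)^k := by rw [← pow_mul, mul_comm, pow_mul, sq_abs]
        _ ≤ 1 + (x^2)^k := by linarith
    have h2 : (x^2/4) ^ k / (k.factorial : ℝ) ≤ Real.exp (x^2/4) := by
      refine le_trans ?_ (Real.sum_le_exp_of_nonneg (by positivity) (k+1))
      exact Finset.single_le_sum (f := fun i => (x^2/4)^i / (i.factorial : ℝ))
        (fun i _ => by positivity) (Finset.self_mem_range_succ k)
    have h3 : (x^2)^k ≤ (k.factorial : ℝ) * 4 ^ k * Real.exp (x^2/4) := by
      have := mul_le_mul_of_nonneg_left h2 (by positivity : (0:ℝ) ≤ (k.factorial : ℝ) * 4^k)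
      calc (x^2)^k = (k.factorial : ℝ) * 4^k * ((x^2/4)^k / (k.factorial : ℝ)) := by
            rw [div_pow]; field_simp
      _ ≤ (k.factorial : ℝ) * 4 ^ k * Real.exp (x^2/4) := this
    have hexp : Real.exp (-x^2/2) ≤ Real.exp (-(1/4) * x^2) :=
      Real.exp_le_exp.mpr (by nlinarith [sq_nonneg x])
    have hexppos : (0:ℝ) < Real.exp (-x^2/2) := Real.exp_pos _
    calc |x| ^ k * Real.exp (-x^2/2) ≤ (1 + (x^2)^k) * Real.exp (-x^2/2) := by
          apply mul_le_mul_of_nonneg_right h1 hexppos.le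
    _ ≤ (1 + (k.factorial : ℝ) * 4 ^ k * Real.exp (x^2/4)) * Real.exp (-x^2/2) := by
          apply mul_le_mul_of_nonneg_right (by linarith) hexppos.le
    _ = Real.exp (-x^2/2) + (k.factorial : ℝ) * 4 ^ k * Real.exp (x^2/4 + -x^2/2) := by
          rw [Real.exp_add]; ring
    _ ≤ Real.exp (-(1/4) * x^2) + (k.factorial : ℝ) * 4 ^ k * Real.exp (-(1/4) * x^2) := by
          have : Real.exp (x^2/4 + -x^2/2) ≤ Real.exp (-(1/4) * x^2) :=
            Real.exp_le_exp.mpr (by nlinarith)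
          have h4 : (0:ℝ) ≤ (k.factorial : ℝ) * 4 ^ k := by positivity
          nlinarith
    _ = ((k.factorial : ℝ) * 4 ^ k + 1) * Real.exp (-(1/4) * x^2) := by ring
  refine Integrable.mono
    ((integrable_exp_neg_mul_sq (by norm_num : (0:ℝ) < 1/4)).const_mul
      ((k.factorial : ℝ) * 4 ^ k + 1)) ?_ ?_
  · exact ((continuous_abs.pow k).mul (by continuity)).aestronglyMeasurable
  · refine Filter.Eventually.of_forall fun x => ?_
    have e1 : ‖|x| ^ k * Real.exp (-x^2/2)‖ = |x| ^ k * Real.exp (-x^2/2) :=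
      Real.norm_of_nonneg (by positivity)
    have e2 : ‖((k.factorial : ℝ) * 4 ^ k + 1) * Real.exp (-(1/4) * x^2)‖
        = ((k.factorial : ℝ) * 4 ^ k + 1) * Real.exp (-(1/4) * x^2) :=
      Real.norm_of_nonneg (by positivity)
    rw [e1, e2]
    exact hbound x

private lemma pow_mul_exp_integrable (k : ℕ) :
    Integrable (fun x : ℝ => x ^ k * Real.exp (-x^2/2)) volume := by
  refine (abs_pow_mul_exp_integrable k).mono
    ((continuous_pow k).mul (by continuity)).aestronglyMeasurable
    (Filter.Eventually.of_forall fun x => ?_)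
  simp [Real.norm_eq_abs, abs_mul, abs_pow, abs_abs]

private lemma tendsto_pow_mul_exp_top (n : ℕ) :
    Tendsto (fun x : ℝ => x ^ n * Real.exp (-x^2/2)) atTop (nhds 0) := by
  have h := rpow_mul_exp_neg_mul_sq_isLittleO_exp_neg (by norm_num : (0:ℝ) < 1/2) (n : ℝ)
  have h2 : Tendsto (fun x : ℝ => Real.exp (-(1/2) * x)) atTop (nhds 0) := by
    have : Tendsto (fun x : ℝ => -(1/2) * x) atTop atBot := by
      apply Filter.Tendsto.const_mul_atTop_of_neg (by norm_num) tendsto_id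
    exact Real.tendsto_exp_atBot.comp this
  have h3 := h.isBigO.trans_tendsto h2
  have heq : (fun x : ℝ => x ^ (n:ℝ) * Real.exp (-(1/2) * x^2))
      = fun x : ℝ => x ^ n * Real.exp (-x^2/2) := by
    funext x; rw [Real.rpow_natCast]; ring_nf
  rwa [heq] at h3

private lemma tendsto_pow_mul_exp_bot (n : ℕ) :
    Tendsto (fun x : ℝ => x ^ n * Real.exp (-x^2/2)) atBot (nhds 0) := by
  have h := (tendsto_pow_mul_exp_top n).comp tendsto_neg_atBot_atTop
  have heq : ((fun x : ℝ => x ^ n * Real.exp (-x^2/2)) ∘ (fun x : ℝ => -x))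
      = fun x : ℝ => (-1:ℝ)^n * (x ^ n * Real.exp (-x^2/2)) := by
    funext x
    show (-x) ^ n * Real.exp (-(-x)^2/2) = (-1:ℝ)^n * (x ^ n * Real.exp (-x^2/2))
    rw [neg_pow, neg_sq]
    ring
  rw [heq] at h
  have h4 := h.const_mul ((-1:ℝ)^n)
  simp only [mul_zero] at h4
  have heq2 : (fun x : ℝ => (-1:ℝ)^n * ((-1:ℝ)^n * (x ^ n * Real.exp (-x^2/2))))
      = fun x : ℝ => x ^ n * Real.exp (-x^2/2) := by
    funext x
    rw [← mul_assoc, ← mul_pow]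
    norm_num
  rwa [heq2] at h4

private lemma gauss_vol_rec (k : ℕ) :
    ∫ x : ℝ, x ^ (k+2) * Real.exp (-x^2/2)
      = ((k:ℝ)+1) * ∫ x : ℝ, x ^ k * Real.exp (-x^2/2) := by
  set u : ℝ → ℝ := fun x => -(x^(k+1) * Real.exp (-x^2/2)) with hu
  set u' : ℝ → ℝ := fun x => x^(k+2) * Real.exp (-x^2/2)
    - ((k:ℝ)+1) * (x^k * Real.exp (-x^2/2)) with hu'
  have hderiv : ∀ x : ℝ, HasDerivAt u (u' x) x := by
    intro x
    have hexp : HasDerivAt (fun x : ℝ => Real.exp (-x^2/2)) (Real.exp (-x^2/2) * (-x)) x := by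
      have hinner : HasDerivAt (fun x : ℝ => -x^2/2) (-x) x := by
        have h := ((hasDerivAt_pow 2 x).neg).div_const 2
        norm_num at h
        refine h.congr_deriv ?_
        ring
      exact hinner.exp
    have hp : HasDerivAt (fun x : ℝ => x^(k+1)) (((k:ℝ)+1) * x^k) x := by
      have := hasDerivAt_pow (k+1) x
      refine this.congr_deriv ?_
      push_cast; ring_nf
    have := (hp.mul hexp).neg
    refine this.congr_deriv ?_
    rw [hu']
    push_cast
    ring
  have hint : Integrable u' volume :=
    (pow_mul_exp_integrable (k+2)).sub ((pow_mul_exp_integrable k).const_mul _)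
  have hu0 : u 0 = 0 := by simp [hu]
  have htop : Tendsto u atTop (nhds 0) := by
    have := (tendsto_pow_mul_exp_top (k+1)).neg
    simpa using this
  have hbot : Tendsto u atBot (nhds 0) := by
    have := (tendsto_pow_mul_exp_bot (k+1)).neg
    simpa using this
  have hIoi : ∫ x in Set.Ioi (0:ℝ), u' x = 0 := by
    rw [MeasureTheory.integral_Ioi_of_hasDerivAt_of_tendsto' (fun x _ => hderiv x)
      hint.integrableOn htop, hu0, sub_zero]
  have hIic : ∫ x in Set.Iic (0:ℝ), u' x = 0 := by
    rw [MeasureTheory.integral_Iic_of_hasDerivAt_of_tendsto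
      (Continuous.continuousWithinAt (by continuity)) (fun x _ => hderiv x)
      hint.integrableOn hbot, hu0, zero_sub, neg_zero]
  have htotal : ∫ x : ℝ, u' x = 0 := by
    rw [← intervalIntegral.integral_Iic_add_Ioi (b := (0:ℝ)) hint.integrableOn hint.integrableOn, hIoi, hIic, add_zero]
  have := htotal
  rw [hu'] at this
  rw [MeasureTheory.integral_sub (pow_mul_exp_integrable (k+2))
    ((pow_mul_exp_integrable k).const_mul _), sub_eq_zero] at this
  rw [this, ← integral_const_mul]



private lemma gauss_transfer (f : ℝ → ℝ) : ∫ x, f x ∂(gaussianReal 0 1)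
    = ∫ x, (Real.sqrt (2 * Real.pi))⁻¹ * (Real.exp (-x^2/2) * f x) := by
  rw [gaussianReal_of_var_ne_zero 0 one_ne_zero]
  have h1 : (gaussianPDF 0 1) = fun x => ((gaussianPDFReal 0 1 x).toNNReal : ℝ≥0∞) := by
    funext x; rw [gaussianPDF]; rfl
  rw [h1, integral_withDensity_eq_integral_smul
    ((measurable_gaussianPDFReal 0 1).real_toNNReal) f]
  congr 1
  funext x
  rw [NNReal.smul_def, smul_eq_mul, Real.coe_toNNReal _ (gaussianPDFReal_nonneg 0 1 x)]
  have h2 : gaussianPDFReal 0 1 x = (Real.sqrt (2*Real.pi))⁻¹ * Real.exp (-x^2/2) := by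
    simp [gaussianPDFReal]
  rw [h2]; ring

private lemma gauss_abs_pow_integrable (k : ℕ) :
    Integrable (fun x => |x|^k) (gaussianReal 0 1) := by
  rw [gaussianReal_of_var_ne_zero 0 one_ne_zero]
  have h1 : (gaussianPDF 0 1) = fun x => ((gaussianPDFReal 0 1 x).toNNReal : ℝ≥0∞) := by
    funext x; rw [gaussianPDF]; rfl
  rw [h1, integrable_withDensity_iff_integrable_smul
    ((measurable_gaussianPDFReal 0 1).real_toNNReal)]
  refine (((abs_pow_mul_exp_integrable k).const_mul
    ((Real.sqrt (2*Real.pi))⁻¹)).congr (Filter.Eventually.of_forall fun x => ?_))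
  show _ = (gaussianPDFReal 0 1 x).toNNReal • |x| ^ k
  rw [NNReal.smul_def, smul_eq_mul, Real.coe_toNNReal _ (gaussianPDFReal_nonneg 0 1 x)]
  simp [gaussianPDFReal]
  ring

private lemma gauss_pow_integrable (k : ℕ) :
    Integrable (fun x => x^k) (gaussianReal 0 1) := by
  refine (gauss_abs_pow_integrable k).mono
    (Measurable.aestronglyMeasurable (by measurability))
    (Filter.Eventually.of_forall fun x => ?_)
  simp [Real.norm_eq_abs, abs_pow, abs_abs]

private lemma gauss_moment_rec (k : ℕ) :
    ∫ x, x^(k+2) ∂(gaussianReal 0 1) = ((k:ℝ)+1) * ∫ x, x^k ∂(gaussianReal 0 1) := by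
  rw [gauss_transfer, gauss_transfer]
  have hre : ∀ j : ℕ, (fun x : ℝ => (Real.sqrt (2 * Real.pi))⁻¹ * (Real.exp (-x^2/2) * x ^ j))
      = fun x : ℝ => (Real.sqrt (2 * Real.pi))⁻¹ * (x ^ j * Real.exp (-x^2/2)) := by
    intro j; funext x; ring
  rw [hre, hre, integral_const_mul, integral_const_mul, gauss_vol_rec]
  ring

private lemma gauss_even_ge_one : ∀ j : ℕ, (1:ℝ) ≤ ∫ x, x^(2*j) ∂(gaussianReal 0 1) := by
  intro j
  induction j with
  | zero => simp
  | succ j ih =>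
    have h1 : 2*(j+1) = 2*j+2 := by ring
    rw [h1, gauss_moment_rec]
    nlinarith [Nat.cast_nonneg (α := ℝ) (2*j)]

private lemma young_pow {p q : ℕ} (hpq : p ≤ q) (hq : 0 < q) {a : ℝ} (ha : 0 ≤ a) :
    (q:ℝ) * a^p ≤ (p:ℝ) * a^q + ((q:ℝ) - p) := by
  have hq' : (0:ℝ) < q := by exact_mod_cast hq
  have hpq' : (p:ℝ) ≤ q := by exact_mod_cast hpq
  have w1 : (0:ℝ) ≤ (p:ℝ)/q := by positivity
  have w2 : (0:ℝ) ≤ ((q:ℝ)-p)/q := div_nonneg (by linarith) hq'.le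
  have hw : (p:ℝ)/q + ((q:ℝ)-p)/q = 1 := by field_simp; ring
  have key := Real.geom_mean_le_arith_mean2_weighted w1 w2 (pow_nonneg ha q) zero_le_one hw
  rw [Real.one_rpow, mul_one, mul_one] at key
  have hrp : (a^q : ℝ) ^ ((p:ℝ)/q) = a ^ p := by
    rw [← Real.rpow_natCast a q, ← Real.rpow_mul ha, ← Real.rpow_natCast a p]
    congr 1
    field_simp
  rw [hrp] at key
  have h2 := mul_le_mul_of_nonneg_left key hq'.le
  calc (q:ℝ) * a^p ≤ (q:ℝ)*((p:ℝ)/q * a^q + ((q:ℝ)-p)/q) := h2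
  _ = (p:ℝ)*a^q + ((q:ℝ)-p) := by field_simp

private lemma two_mul_pow_succ_le (n : ℕ) (a : ℝ) (ha : 0 ≤ a) :
    a^(n+1) ≤ (a^n + a^(n+2))/2 := by
  have h := mul_nonneg (pow_nonneg ha n) (sq_nonneg (a-1))
  rw [pow_succ, show n+2 = (n+1)+1 by ring, pow_succ, pow_succ]
  nlinarith [h]

set_option maxHeartbeats 1000000 in
/-- One-variable prototype of the interpolation argument: with `ξ` moment-matching the
standard Gaussian up to order `m` and `g` an independent standard Gaussian,
`φ(t) = E[F(√t ξ + √(1−t) g)]` satisfies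
`|φ(1) − φ(0)| ≤ ((m+1)/m!) E[|ξ|^{m+1}] ‖F^{(m+1)}‖_∞ ∫_0^1 t^{(m−1)/2} dt / 2`. -/
theorem one_variable_interpolation
    {Ω : Type*} [MeasurableSpace Ω] (μ : Measure Ω) [IsProbabilityMeasure μ]
    (m : ℕ) (hm : 2 ≤ m)
    (ξ g : Ω → ℝ) (hmeasξ : Measurable ξ) (hmeasg : Measurable g)
    (hindep : ProbabilityTheory.IndepFun ξ g μ)
    (hg : μ.map g = gaussianReal 0 1)
    (hmean : ∫ ω, ξ ω ∂μ = 0)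
    (hmoments : ∀ k : ℕ, 1 ≤ k → k ≤ m →
      ∫ ω, (ξ ω) ^ k ∂μ = ∫ x, x ^ k ∂(gaussianReal 0 1))
    (hmomInt : Integrable (fun ω => |ξ ω| ^ (m + 1)) μ)
    (F : ℝ → ℝ) (hF : ContDiff ℝ (⊤ : ℕ∞) F)
    (hFbdd : ∀ k : ℕ, ∃ b : ℝ, ∀ x, |iteratedDeriv k F x| ≤ b)
    (M : ℝ) (hM : ∀ x, |iteratedDeriv (m + 1) F x| ≤ M) :
    |(∫ ω, F (Real.sqrt 1 * ξ ω + Real.sqrt (1 - 1) * g ω) ∂μ)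
        - ∫ ω, F (Real.sqrt 0 * ξ ω + Real.sqrt (1 - 0) * g ω) ∂μ|
      ≤ ((m : ℝ) + 1) / (Nat.factorial m : ℝ) * (∫ ω, |ξ ω| ^ (m + 1) ∂μ) * M
          * (∫ t in (0:ℝ)..1, t ^ (((m : ℝ) - 1) / 2)) / 2 := by
  classical
  have hm2 : (2:ℝ) ≤ (m:ℝ) := by exact_mod_cast hm
  have hMnn : 0 ≤ M := le_trans (abs_nonneg _) (hM 0)
  set γ := gaussianReal 0 1 with hγdef
  set A := ∫ ω, |ξ ω| ^ (m+1) ∂μ with hAdef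
  simp only [Real.sqrt_one, sub_self, sub_zero, Real.sqrt_zero, one_mul, zero_mul,
    add_zero, zero_add]
  have hri : ∫ t in (0:ℝ)..1, t ^ (((m:ℝ)-1)/2) = 2/((m:ℝ)+1) := by
    rw [integral_rpow (Or.inl (by linarith : (-1:ℝ) < ((m:ℝ)-1)/2))]
    rw [Real.one_rpow, Real.zero_rpow (by intro h; nlinarith [h] : ((m:ℝ)-1)/2 + 1 ≠ 0)]
    rw [show ((m:ℝ)-1)/2 + 1 = ((m:ℝ)+1)/2 by ring, sub_zero, one_div_div]
  rw [hri]
  have hfin : ((m:ℝ)+1)/(m.factorial:ℝ) * A * M * (2/((m:ℝ)+1))/2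
      = M * A / (m.factorial:ℝ) := by
    have h1 : (m:ℝ)+1 ≠ 0 := by positivity
    have h2 : (m.factorial:ℝ) ≠ 0 := by positivity
    field_simp
  rw [hfin]
  -- transfer g-integral to the Gaussian measure
  have hgint : ∫ ω, F (g ω) ∂μ = ∫ x, F x ∂γ := by
    rw [← hg]
    exact (integral_map hmeasg.aemeasurable hF.continuous.aestronglyMeasurable).symm
  rw [hgint]
  -- integrability facts
  obtain ⟨b, hb⟩ := hFbdd 0
  have hb' : ∀ x, |F x| ≤ b := by
    intro x; have := hb x; rwa [iteratedDeriv_zero] at this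
  have hFcont : Continuous F := hF.continuous
  have hFξ : Integrable (fun ω => F (ξ ω)) μ := by
    refine Integrable.mono (integrable_const b)
      ((hFcont.measurable.comp hmeasξ).aestronglyMeasurable)
      (Filter.Eventually.of_forall fun ω => ?_)
    rw [Real.norm_eq_abs, Real.norm_eq_abs]
    exact (hb' (ξ ω)).trans (le_abs_self b)
  have hFγ : Integrable F γ := by
    refine Integrable.mono (integrable_const b) hFcont.aestronglyMeasurable
      (Filter.Eventually.of_forall fun x => ?_)
    rw [Real.norm_eq_abs, Real.norm_eq_abs]
    exact (hb' x).trans (le_abs_self b)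
  have habsξ : ∀ k, k ≤ m + 1 → Integrable (fun ω => |ξ ω| ^ k) μ := by
    intro k hk
    have hint1 : Integrable (fun ω => 1 + |ξ ω| ^ (m+1)) μ := by
      exact (integrable_const (1:ℝ)).add hmomInt
    refine Integrable.mono hint1
      ((hmeasξ.abs.pow_const k).aestronglyMeasurable)
      (Filter.Eventually.of_forall fun ω => ?_)
    rw [Real.norm_eq_abs, Real.norm_eq_abs, abs_of_nonneg (pow_nonneg (abs_nonneg _) _)]
    have h1 : (0:ℝ) ≤ |ξ ω| := abs_nonneg _
    have h2 : (0:ℝ) ≤ |ξ ω| ^ (m+1) := pow_nonneg h1 _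
    rcases le_or_gt (|ξ ω|) 1 with h | h
    · have h3 : |ξ ω| ^ k ≤ 1 := pow_le_one₀ h1 h
      rw [abs_of_nonneg (by linarith : (0:ℝ) ≤ 1 + |ξ ω| ^ (m+1))]
      linarith
    · have h3 : |ξ ω| ^ k ≤ |ξ ω| ^ (m+1) := pow_le_pow_right₀ h.le hk
      rw [abs_of_nonneg (by linarith : (0:ℝ) ≤ 1 + |ξ ω| ^ (m+1))]
      linarith
  have hpowξ : ∀ k, k ≤ m + 1 → Integrable (fun ω => (ξ ω) ^ k) μ := by
    intro k hk
    refine (habsξ k hk).mono ((hmeasξ.pow_const k).aestronglyMeasurable)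
      (Filter.Eventually.of_forall fun ω => ?_)
    simp [Real.norm_eq_abs, abs_pow, abs_abs]
  have hpowγ : ∀ k, Integrable (fun x : ℝ => x ^ k) γ := gauss_pow_integrable
  have habsγ : ∀ k, Integrable (fun x : ℝ => |x| ^ k) γ := gauss_abs_pow_integrable
  -- Taylor expansion
  set c : ℕ → ℝ := fun k => iteratedDeriv k F 0 with hc
  set P : ℝ → ℝ := fun x => ∑ k ∈ Finset.range (m+1), c k * x ^ k / (k.factorial : ℝ)
    with hP
  set R : ℝ → ℝ := fun x => F x - P x with hR
  have hRb : ∀ x, |R x| ≤ M / ((m+1).factorial : ℝ) * |x| ^ (m+1) := by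
    intro x
    have h1 := taylor_bound M m F (hF.of_le (by simp)) hM x
    calc |R x| ≤ M * |x| ^ (m+1) / ((m+1).factorial : ℝ) := h1
    _ = M / ((m+1).factorial : ℝ) * |x| ^ (m+1) := by ring
  have hPre : P = fun x => ∑ k ∈ Finset.range (m+1),
      (c k / (k.factorial : ℝ)) * x ^ k := by
    funext x
    exact Finset.sum_congr rfl fun k _ => by ring
  have hPξ : Integrable (fun ω => P (ξ ω)) μ := by
    have h1 : (fun ω => P (ξ ω)) = fun ω => ∑ k ∈ Finset.range (m+1),
        (c k / (k.factorial : ℝ)) * (ξ ω) ^ k := by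
      funext ω; exact congrFun hPre (ξ ω)
    rw [h1]
    exact integrable_finset_sum _ fun k hk =>
      (hpowξ k (by have := Finset.mem_range.mp hk; omega)).const_mul _
  have hPγ : Integrable P γ := by
    rw [hPre]
    exact integrable_finset_sum _ fun k hk => (hpowγ k).const_mul _
  have hRξ : Integrable (fun ω => R (ξ ω)) μ := hFξ.sub hPξ
  have hRγ : Integrable R γ := hFγ.sub hPγ
  -- matching moments
  have hmomk : ∀ k ∈ Finset.range (m+1), ∫ ω, (ξ ω) ^ k ∂μ = ∫ x, x ^ k ∂γ := by
    intro k hk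
    rcases Nat.eq_zero_or_pos k with h0 | h0
    · subst h0; simp
    · exact hmoments k h0 (by have := Finset.mem_range.mp hk; omega)
  have hPeq : ∫ ω, P (ξ ω) ∂μ = ∫ x, P x ∂γ := by
    have h1 : (fun ω => P (ξ ω)) = fun ω => ∑ k ∈ Finset.range (m+1),
        (c k / (k.factorial : ℝ)) * (ξ ω) ^ k := by
      funext ω; exact congrFun hPre (ξ ω)
    rw [h1, hPre, integral_finset_sum _ (fun k hk =>
        (hpowξ k (by have := Finset.mem_range.mp hk; omega)).const_mul _),
      integral_finset_sum _ (fun k _ => (hpowγ k).const_mul _)]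
    refine Finset.sum_congr rfl fun k hk => ?_
    rw [integral_const_mul, integral_const_mul, hmomk k hk]
  have hdiff : (∫ ω, F (ξ ω) ∂μ) - ∫ x, F x ∂γ
      = (∫ ω, R (ξ ω) ∂μ) - ∫ x, R x ∂γ := by
    have h1 : (fun ω => F (ξ ω)) = fun ω => P (ξ ω) + R (ξ ω) := by
      funext ω; rw [hR]; ring
    have h2 : F = fun x => P x + R x := by funext x; rw [hR]; ring
    rw [h1, h2, integral_add hPξ hRξ, integral_add hPγ hRγ, hPeq]
    ring
  set B := ∫ x, |x| ^ (m+1) ∂γ with hBdef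
  have hAnn : 0 ≤ A := integral_nonneg fun ω => by positivity
  have hR1 : |∫ ω, R (ξ ω) ∂μ| ≤ M / ((m+1).factorial : ℝ) * A := by
    calc |∫ ω, R (ξ ω) ∂μ| ≤ ∫ ω, |R (ξ ω)| ∂μ := by
          simpa [Real.norm_eq_abs] using
            MeasureTheory.norm_integral_le_integral_norm (μ := μ) (fun ω => R (ξ ω))
    _ ≤ ∫ ω, M / ((m+1).factorial : ℝ) * |ξ ω| ^ (m+1) ∂μ :=
          integral_mono hRξ.abs (hmomInt.const_mul _) (fun ω => hRb (ξ ω))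
    _ = M / ((m+1).factorial : ℝ) * A := integral_const_mul _ _
  have hR2 : |∫ x, R x ∂γ| ≤ M / ((m+1).factorial : ℝ) * B := by
    calc |∫ x, R x ∂γ| ≤ ∫ x, |R x| ∂γ := by
          simpa [Real.norm_eq_abs] using
            MeasureTheory.norm_integral_le_integral_norm (μ := γ) R
    _ ≤ ∫ x, M / ((m+1).factorial : ℝ) * |x| ^ (m+1) ∂γ :=
          integral_mono hRγ.abs ((habsγ (m+1)).const_mul _) (fun x => hRb x)
    _ = M / ((m+1).factorial : ℝ) * B := integral_const_mul _ _
  -- the key moment comparison: B ≤ m * A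
  have hBA : B ≤ (m:ℝ) * A := by
    rcases Nat.even_or_odd m with hev | hod
    · -- m even
      obtain ⟨j, hj⟩ := hev
      have hev' : Even m := ⟨j, hj⟩
      have hGe : ∫ ω, (ξ ω)^m ∂μ = ∫ x, x^m ∂γ := hmoments m (by omega) le_rfl
      have hg1 : (1:ℝ) ≤ ∫ x, x^m ∂γ := by
        have h := gauss_even_ge_one j
        rwa [show 2*j = m by omega] at h
      have hrec : ∫ x, x^(m+2) ∂γ = ((m:ℝ)+1) * ∫ x, x^m ∂γ := gauss_moment_rec m
      have hb1 : B ≤ ((∫ x, x^m ∂γ) + ∫ x, x^(m+2) ∂γ)/2 := by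
        have hpt : ∀ x : ℝ, |x|^(m+1) ≤ (x^m + x^(m+2))/2 := by
          intro x
          have h1 : |x|^m = x^m := hev'.pow_abs x
          have h2 : |x|^(m+2) = x^(m+2) := (hev'.add even_two).pow_abs x
          rw [← h1, ← h2]
          exact two_mul_pow_succ_le m (|x|) (abs_nonneg x)
        calc B ≤ ∫ x, (x^m + x^(m+2))/2 ∂γ :=
              integral_mono (habsγ (m+1)) (((hpowγ m).add (hpowγ (m+2))).div_const 2) hpt
        _ = ((∫ x, x^m ∂γ) + ∫ x, x^(m+2) ∂γ)/2 := by
              rw [integral_div, integral_add (hpowγ m) (hpowγ (m+2))]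
      have hy : ∀ ω, ((m:ℝ)+1) * (ξ ω)^m ≤ (m:ℝ) * |ξ ω|^(m+1) + 1 := by
        intro ω
        have h1 := young_pow (p := m) (q := m+1) (by omega) (by omega) (abs_nonneg (ξ ω))
        have he : |ξ ω|^m = (ξ ω)^m := hev'.pow_abs _
        push_cast at h1
        rw [he] at h1
        linarith
      have hyint : ((m:ℝ)+1) * ∫ ω, (ξ ω)^m ∂μ ≤ (m:ℝ) * A + 1 := by
        have hint2 : Integrable (fun ω => (m:ℝ) * |ξ ω| ^ (m+1) + 1) μ := by
          exact (hmomInt.const_mul (m:ℝ)).add (integrable_const 1)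
        have h1 := integral_mono ((hpowξ m (by omega)).const_mul ((m:ℝ)+1))
          hint2 (fun ω => hy ω)
        rw [integral_const_mul, integral_add (hmomInt.const_mul _) (integrable_const 1),
          integral_const_mul, integral_const] at h1
        simpa using h1
      rw [← hGe] at hg1 hb1
      set G := ∫ ω, (ξ ω)^m ∂μ
      rw [hrec, ← hGe] at hb1
      linarith [mul_nonneg (sub_nonneg.2 hm2) (sub_nonneg.2 hg1)]
    · -- m odd
      obtain ⟨j, hj⟩ := hod
      have hj1 : 1 ≤ j := by omega
      have hGe : ∫ ω, (ξ ω)^(2*j) ∂μ = ∫ x, x^(2*j) ∂γ :=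
        hmoments (2*j) (by omega) (by omega)
      have hg1 : (1:ℝ) ≤ ∫ x, x^(2*j) ∂γ := gauss_even_ge_one j
      have hBeq : B = ∫ x, x^(m+1) ∂γ := by
        rw [hBdef]
        congr 1
        funext x
        exact (Odd.add_one ⟨j, hj⟩).pow_abs x
      have hrec : ∫ x, x^(m+1) ∂γ = (m:ℝ) * ∫ x, x^(2*j) ∂γ := by
        have h := gauss_moment_rec (2*j)
        rw [show 2*j+2 = m+1 by omega] at h
        rw [h]
        have : ((2*j:ℕ):ℝ) + 1 = (m:ℝ) := by
          have h2 : (2*j+1 : ℕ) = m := by omega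
          exact_mod_cast congrArg (Nat.cast : ℕ → ℝ) h2
        rw [this]
      have hy : ∀ ω, ((m:ℝ)+1) * (ξ ω)^(2*j) ≤ ((m:ℝ)-1) * |ξ ω|^(m+1) + 2 := by
        intro ω
        have h1 := young_pow (p := 2*j) (q := m+1) (by omega) (by omega) (abs_nonneg (ξ ω))
        have he : |ξ ω|^(2*j) = (ξ ω)^(2*j) := (even_two_mul j).pow_abs _
        have hcast : 2*(j:ℝ) = (m:ℝ) - 1 := by
          have h2 : (2*j+1 : ℕ) = m := by omega
          have h3 := congrArg (Nat.cast : ℕ → ℝ) h2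
          push_cast at h3
          linarith
        push_cast at h1
        rw [he] at h1
        rw [show ((m:ℝ)-1) = 2*(j:ℝ) from hcast.symm]
        linarith
      have hyint : ((m:ℝ)+1) * ∫ ω, (ξ ω)^(2*j) ∂μ ≤ ((m:ℝ)-1) * A + 2 := by
        have hint2 : Integrable (fun ω => ((m:ℝ)-1) * |ξ ω| ^ (m+1) + 2) μ := by
          exact (hmomInt.const_mul ((m:ℝ)-1)).add (integrable_const 2)
        have h1 := integral_mono ((hpowξ (2*j) (by omega)).const_mul ((m:ℝ)+1))
          hint2 (fun ω => hy ω)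
        rw [integral_const_mul, integral_add (hmomInt.const_mul _) (integrable_const 2),
          integral_const_mul, integral_const] at h1
        simpa using h1
      rw [hGe] at hyint
      set G := ∫ x, x^(2*j) ∂γ
      have hmpos : (0:ℝ) < (m:ℝ) - 1 := by linarith
      have hGA : G ≤ A := by
        have h1 : ((m:ℝ)-1) * G ≤ ((m:ℝ)-1) * A := by linarith
        exact le_of_mul_le_mul_left h1 hmpos
      rw [hBeq, hrec]
      exact mul_le_mul_of_nonneg_left hGA (by linarith)
  -- combine
  calc |(∫ ω, F (ξ ω) ∂μ) - ∫ x, F x ∂γ|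
      = |(∫ ω, R (ξ ω) ∂μ) - ∫ x, R x ∂γ| := by rw [hdiff]
  _ ≤ |∫ ω, R (ξ ω) ∂μ| + |∫ x, R x ∂γ| := by
      have := abs_add_le (∫ ω, R (ξ ω) ∂μ) (-(∫ x, R x ∂γ))
      rw [abs_neg] at this
      simpa [sub_eq_add_neg] using this
  _ ≤ M / ((m+1).factorial : ℝ) * A + M / ((m+1).factorial : ℝ) * B :=
      add_le_add hR1 hR2
  _ ≤ M / ((m+1).factorial : ℝ) * A + M / ((m+1).factorial : ℝ) * ((m:ℝ) * A) := by
      have h1 : (0:ℝ) ≤ M / ((m+1).factorial : ℝ) := by positivity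
      exact add_le_add_right (mul_le_mul_of_nonneg_left hBA h1) _
  _ = M * A / (m.factorial : ℝ) := by
      rw [Nat.factorial_succ]
      have h1 : (m.factorial:ℝ) ≠ 0 := by positivity
      have h2 : (m:ℝ)+1 ≠ 0 := by positivity
      push_cast
      field_simp
      ring
end
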